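/- arXiv:1507.01283 — 5 statements merged into one kernel-verified Lean document; each statement's English description precedes it below -/
import Mathlib

section
/- Let k be a field and let Φ ∈ k[x_1,…,x_n,y_1,…,y_m] be an irreducible polynomial that is bi-homogeneous of bi-degree (p,q) (i.e., homogeneous of degree p in the variables x_1,…,x_n and homogeneous of degree q in the variables y_1,…,y_m), with p+q ≥ 1. Then the polynomial Φ − 1 is irreducible in k[x_1,…,x_n,y_1,…,y_m]. -/
/-!
A bi-homogeneous `Φ` of bi-degree `(p, q)` is homogeneous of degree `d = p + q`. Substituting
`x ↦ t • x` sends a polynomial `f` to `∑ⱼ fⱼ tʲ`, whose leading coefficient is the top homogeneous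
component of `f`, and sends `Φ - 1` to `Φ tᵈ - 1`. A factorisation `Φ - 1 = f g` therefore
factors `Φ` as the product of the top components of `f` and `g`; by irreducibility one of them is a
unit, hence a nonzero constant, so that factor has degree `0` and is itself a unit.
-/

open Polynomial

namespace MvPolynomial

variable {σ R : Type*} [CommRing R]

theorem IsWeightedHomogeneous.add_weight {w₁ w₂ : σ → ℕ} {φ : MvPolynomial σ R} {a b : ℕ}
    (h₁ : φ.IsWeightedHomogeneous w₁ a) (h₂ : φ.IsWeightedHomogeneous w₂ b) :
    φ.IsWeightedHomogeneous (w₁ + w₂) (a + b) := by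
  intro e he
  rw [← h₁ he, ← h₂ he]
  simp only [Finsupp.weight_apply, Finsupp.sum, ← Finset.sum_add_distrib, Pi.add_apply, smul_add]

/-- `f ↦ f(t • x) = ∑ⱼ fⱼ tʲ`, where `fⱼ` is the homogeneous component of `f` of degree `j`. -/
noncomputable def gradingPoly : MvPolynomial σ R →ₐ[R] (MvPolynomial σ R)[X] :=
  aeval fun i => Polynomial.C (X i) * Polynomial.X

theorem gradingPoly_monomial (d : σ →₀ ℕ) (r : R) :
    gradingPoly (monomial d r) = Polynomial.C (monomial d r) * Polynomial.X ^ d.degree := by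
  rw [gradingPoly, aeval_monomial, monomial_eq, Finsupp.prod, Finsupp.prod,
    Finsupp.degree_apply, ← Finset.prod_pow_eq_pow_sum]
  simp only [mul_pow, Finset.prod_mul_distrib, map_mul, map_prod, map_pow]
  rw [← mul_assoc]
  rfl

theorem coeff_gradingPoly (f : MvPolynomial σ R) (j : ℕ) :
    (gradingPoly f).coeff j = homogeneousComponent j f := by
  classical
  induction f using induction_on' with
  | add f g hf hg => simp [hf, hg]
  | monomial d r =>
    ext e
    rw [gradingPoly_monomial, Polynomial.coeff_C_mul, Polynomial.coeff_X_pow,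
      coeff_homogeneousComponent]
    by_cases h : d = e
    · subst h
      split_ifs <;> simp_all
    · simp [apply_ite (coeff e), coeff_monomial, h]

theorem gradingPoly_eval_one (f : MvPolynomial σ R) : (gradingPoly f).eval 1 = f := by
  induction f using induction_on with
  | C a => simp [gradingPoly]
  | add f g hf hg => simp [hf, hg]
  | mul_X f i hf => rw [map_mul, Polynomial.eval_mul, hf, gradingPoly, aeval_X]; simp

theorem IsHomogeneous.gradingPoly_eq {φ : MvPolynomial σ R} {d : ℕ} (hφ : φ.IsHomogeneous d) :
    gradingPoly φ = Polynomial.C φ * Polynomial.X ^ d := by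
  ext1 j
  rw [coeff_gradingPoly, coeff_C_mul_X_pow, homogeneousComponent_of_mem hφ]

theorem isUnit_of_isUnit_leadingCoeff_gradingPoly [Nontrivial R] {f : MvPolynomial σ R}
    (hf : IsUnit (gradingPoly f).leadingCoeff) : IsUnit f := by
  set N := (gradingPoly f).natDegree
  have htop : (gradingPoly f).leadingCoeff = homogeneousComponent N f := coeff_gradingPoly f N
  -- a unit has a unit, hence nonzero, constant coefficient, which forces degree `0`
  have hN : N = 0 := by
    have hc : constantCoeff (homogeneousComponent N f) ≠ 0 := htop ▸ (hf.map constantCoeff).ne_zero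
    simpa using (homogeneousComponent_isHomogeneous N f hc).symm
  have hf_eq : f = (gradingPoly f).leadingCoeff := by
    conv_lhs => rw [← gradingPoly_eval_one f]
    rw [eq_C_of_natDegree_eq_zero hN, Polynomial.eval_C, leadingCoeff_C]
  exact hf_eq ▸ hf

theorem IsHomogeneous.irreducible_sub_one [IsDomain R] {φ : MvPolynomial σ R} {d : ℕ}
    (hφ : φ.IsHomogeneous d) (hd : d ≠ 0) (hirr : Irreducible φ) : Irreducible (φ - 1) := by
  have hgrad : gradingPoly (φ - 1) = Polynomial.C φ * Polynomial.X ^ d - Polynomial.C 1 := by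
    rw [map_sub, map_one, hφ.gradingPoly_eq, Polynomial.C_1]
  have hdeg : (gradingPoly (φ - 1)).natDegree = d := by
    rw [hgrad, natDegree_sub_C, natDegree_C_mul_X_pow _ _ hirr.ne_zero]
  have hlc : (gradingPoly (φ - 1)).leadingCoeff = φ := by
    rw [Polynomial.leadingCoeff, hdeg, hgrad, Polynomial.coeff_sub, coeff_C_mul_X_pow, if_pos rfl,
      Polynomial.coeff_C, if_neg hd, sub_zero]
  refine ⟨fun hu => hd (hdeg ▸ natDegree_eq_zero_of_isUnit (hu.map gradingPoly)), ?_⟩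
  intro f g hfg
  have hφ_eq : φ = (gradingPoly f).leadingCoeff * (gradingPoly g).leadingCoeff := by
    rw [← Polynomial.leadingCoeff_mul, ← map_mul, ← hfg, hlc]
  exact (hirr.isUnit_or_isUnit hφ_eq).imp isUnit_of_isUnit_leadingCoeff_gradingPoly
    isUnit_of_isUnit_leadingCoeff_gradingPoly

end MvPolynomial

/-- If `Φ` is an irreducible bi-homogeneous polynomial of bi-degree `(p, q)`
with `p + q ≥ 1`, in two groups of variables, then `Φ - 1` is irreducible. -/
theorem stmt_0 (k : Type*) [Field k] (n m : ℕ) (p q : ℕ) (hpq : 1 ≤ p + q)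
    (Φ : MvPolynomial (Fin n ⊕ Fin m) k)
    (hx : Φ.IsWeightedHomogeneous (Sum.elim (fun _ => (1 : ℕ)) fun _ => (0 : ℕ)) p)
    (hy : Φ.IsWeightedHomogeneous (Sum.elim (fun _ => (0 : ℕ)) fun _ => (1 : ℕ)) q)
    (hirr : Irreducible Φ) :
    Irreducible (Φ - 1) := by
  have hΦ : Φ.IsHomogeneous (p + q) := by
    have hw : (Sum.elim (fun _ => 1) fun _ => 0) + (Sum.elim (fun _ => 0) fun _ => 1) =
        (1 : Fin n ⊕ Fin m → ℕ) := by
      ext (i | i) <;> rfl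
    simpa only [MvPolynomial.IsHomogeneous, hw] using hx.add_weight hy
  exact hΦ.irreducible_sub_one (by omega) hirr
end

section
/- Let m ≥ 1 and r ≥ 1 be integers and let n_1, …, n_r be positive integers. Then the number of r-tuples (x_1, …, x_r) ∈ (ℤ/mℤ)^r satisfying the linear equation n_1·x_1 + n_2·x_2 + ⋯ + n_r·x_r = 0 in ℤ/mℤ equals m^{r−1} · gcd(m, n_1, n_2, …, n_r). -/
/-!
The solutions form the kernel of `x ↦ ∑ nᵢ xᵢ` on `(ℤ/mℤ)^r`, whose image is the ideal generated by
the `nᵢ`. By Bézout this ideal is generated by `g = gcd(n₁, …, n_r)`, i.e. it is the cyclic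
subgroup generated by `g`, of order `m / gcd(m, g)`. Hence the kernel has
`m^r / (m / gcd(m, g)) = m^(r-1) · gcd(m, g)` elements.
-/

open Finset

theorem Int.natCast_finset_gcd {ι : Type*} (s : Finset ι) (f : ι → ℕ) :
    ((s.gcd f : ℕ) : ℤ) = s.gcd fun i ↦ (f i : ℤ) := by
  classical
  induction s using Finset.induction_on with
  | empty => simp
  | insert a s _ ih =>
    rw [gcd_insert, gcd_insert, ← ih, ← Int.coe_gcd, Int.gcd_natCast_natCast]
    rfl

theorem Ideal.span_range_natCast_eq_span_gcd {R ι : Type*} [CommRing R] [Fintype ι]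
    (n : ι → ℕ) :
    Ideal.span (Set.range fun i ↦ (n i : R)) = Ideal.span {((univ.gcd n : ℕ) : R)} := by
  apply le_antisymm
  · refine Ideal.span_le.mpr ?_
    rintro _ ⟨i, rfl⟩
    exact Ideal.mem_span_singleton.mpr (Nat.cast_dvd_cast (gcd_dvd (mem_univ i)))
  · obtain ⟨c, hc⟩ := univ.gcd_eq_sum_mul fun i ↦ (n i : ℤ)
    rw [Ideal.span_singleton_le_iff_mem, Ideal.mem_span_range_iff_exists_fun]
    refine ⟨fun i ↦ (c i : R), ?_⟩
    rw [← Int.cast_natCast, Int.natCast_finset_gcd, hc]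
    push_cast
    simp_rw [mul_comm]

theorem AddMonoidHom.card_ker_mul_card_range {G H : Type*} [AddGroup G] [AddGroup H] (f : G →+ H) :
    Nat.card f.ker * Nat.card f.range = Nat.card G := by
  rw [← AddSubgroup.index_ker, AddSubgroup.card_mul_index]

theorem card_solutions_mul_card_span_range {R ι : Type*} [CommRing R] [Fintype ι]
    (c : ι → R) :
    Nat.card {x : ι → R // ∑ i, c i * x i = 0} * Nat.card (Ideal.span (Set.range c)) =
      Nat.card R ^ Fintype.card ι := by
  set f := (Fintype.linearCombination R c).toAddMonoidHom
  have hker : {x : ι → R // ∑ i, c i * x i = 0} ≃ f.ker :=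
    Equiv.subtypeEquivRight fun x ↦ by simp [f, Fintype.linearCombination_apply, mul_comm]
  have hrange : f.range = (Ideal.span (Set.range c)).toAddSubgroup := by
    rw [← LinearMap.range_toAddSubgroup, Fintype.range_linearCombination]
  rw [Nat.card_congr hker, ← Nat.card_eq_fintype_card, ← Nat.card_fun, ← f.card_ker_mul_card_range,
    hrange]
  rfl

theorem ZMod.span_singleton_toAddSubgroup {m : ℕ} (a : ZMod m) :
    (Ideal.span {a}).toAddSubgroup = AddSubgroup.zmultiples a := by
  ext x
  simp only [Submodule.mem_toAddSubgroup, Ideal.mem_span_singleton', AddSubgroup.mem_zmultiples_iff,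
    zsmul_eq_mul]
  exact ⟨fun ⟨b, hb⟩ ↦ ⟨b.cast, by rwa [ZMod.intCast_zmod_cast]⟩, fun ⟨k, hk⟩ ↦ ⟨k, hk⟩⟩

theorem ZMod.card_span_singleton_natCast {m : ℕ} (hm : m ≠ 0) (a : ℕ) :
    Nat.card (Ideal.span {(a : ZMod m)}) = m / m.gcd a := by
  rw [← ZMod.addOrderOf_coe a hm, ← Nat.card_zmultiples, ← ZMod.span_singleton_toAddSubgroup]
  rfl

theorem stmt_8_general (m : ℕ) (hm : 1 ≤ m) (r : ℕ) (hr : 1 ≤ r)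
    (n : Fin r → ℕ) :
    Nat.card {x : Fin r → ZMod m // ∑ i, (n i : ZMod m) * x i = 0} =
      m ^ (r - 1) * Nat.gcd m (Finset.univ.gcd n) := by
  have hm0 : m ≠ 0 := by omega
  have key := card_solutions_mul_card_span_range fun i ↦ (n i : ZMod m)
  rw [Ideal.span_range_natCast_eq_span_gcd, ZMod.card_span_singleton_natCast hm0, Nat.card_zmod,
    Fintype.card_fin] at key
  set d := m.gcd (univ.gcd n)
  have hd : m / d * d = m := Nat.div_mul_cancel (Nat.gcd_dvd_left _ _)
  have hpos : 0 < m / d := Nat.div_pos (Nat.gcd_le_left _ hm) (Nat.gcd_pos_of_pos_left _ hm)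
  apply Nat.eq_of_mul_eq_mul_right hpos
  rw [key, mul_right_comm, mul_assoc, hd, ← pow_succ, Nat.sub_add_cancel hr]

/-- the number of solutions `(x₁, …, x_r) ∈ (ℤ/mℤ)^r` of
`n₁x₁ + ⋯ + n_r x_r = 0` is `m^{r-1} · gcd(m, n₁, …, n_r)`. -/
theorem stmt_8 (m : ℕ) (hm : 1 ≤ m) (r : ℕ) (hr : 1 ≤ r)
    (n : Fin r → ℕ) (hn : ∀ i, 1 ≤ n i) :
    Nat.card {x : Fin r → ZMod m // ∑ i, (n i : ZMod m) * x i = 0} =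
      m ^ (r - 1) * Nat.gcd m (Finset.univ.gcd n) :=
  stmt_8_general m hm r hr n
end

section
/- For all positive integers n and m, the Dirichlet convolution identity Σ_{d | n} μ(n/d) · gcd(d, m) = δ_m(n) · ϕ(n) holds; that is, Σ_{d | n} μ(n/d) · gcd(d, m) equals ϕ(n) if n divides m, and equals 0 if n does not divide m. -/
/-!
Gauss's identity `∑_{d ∣ g} φ d = g` on the divisors of `g = gcd k m` shows that `k ↦ gcd k m` is
the divisor sum of `d ↦ [d ∣ m] φ d`; Möbius inversion gives the claim.
-/

open ArithmeticFunction Nat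
open scoped ArithmeticFunction.Moebius

theorem Nat.filter_dvd_divisors_eq_divisors_gcd {k : ℕ} (hk : k ≠ 0) (m : ℕ) :
    k.divisors.filter (· ∣ m) = (k.gcd m).divisors := by
  ext i
  simp only [Finset.mem_filter, Nat.mem_divisors, Nat.dvd_gcd_iff]
  constructor
  · rintro ⟨⟨hik, hk⟩, him⟩
    exact ⟨⟨hik, him⟩, Nat.gcd_ne_zero_left hk⟩
  · rintro ⟨⟨hik, him⟩, -⟩
    exact ⟨⟨hik, hk⟩, him⟩

theorem Nat.sum_divisors_ite_dvd_totient {k : ℕ} (hk : k ≠ 0) (m : ℕ) :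
    ∑ i ∈ k.divisors, (if i ∣ m then φ i else 0) = k.gcd m := by
  rw [← Finset.sum_filter, Nat.filter_dvd_divisors_eq_divisors_gcd hk, Nat.sum_totient]

theorem stmt_9_general (n m : ℕ) (hn : 1 ≤ n) :
    ∑ d ∈ n.divisors, (ArithmeticFunction.moebius (n / d)) * (Nat.gcd d m : ℤ) =
      if n ∣ m then (Nat.totient n : ℤ) else 0 := by
  have gauss : ∀ k > 0, ∑ i ∈ k.divisors, (if i ∣ m then (φ i : ℤ) else 0) = (k.gcd m : ℤ) :=
    fun k hk => by exact_mod_cast Nat.sum_divisors_ite_dvd_totient hk.ne' m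
  have inversion := (sum_eq_iff_sum_mul_moebius_eq (R := ℤ)).mp gauss n hn
  simp only [Int.cast_id] at inversion
  rw [← inversion, Nat.sum_divisorsAntidiagonal' (fun a b => μ a * (b.gcd m : ℤ))]

/-- `Σ_{d ∣ n} μ(n/d) · gcd(d, m) = ϕ(n)` if `n ∣ m`, and `0` otherwise. -/
theorem stmt_9 (n m : ℕ) (hn : 1 ≤ n) (hm : 1 ≤ m) :
    ∑ d ∈ n.divisors, (ArithmeticFunction.moebius (n / d)) * (Nat.gcd d m : ℤ) =
      if n ∣ m then (Nat.totient n : ℤ) else 0 :=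
  stmt_9_general n m hn
end

section
/- Let n ≥ 1 be an integer and let q be a prime power with gcd(q, n) = 1. Let X_n(F_q) denote the set of pairs (ψ, φ) where ψ is a monic polynomial of degree n over F_q whose coefficient of z^{n−1} is zero, φ is a polynomial over F_q of degree at most n−1, and Res(ψ, φ) = 1. Then q · |X_n(F_q)| = |Res_n(F_q)|. -/
open Polynomial

/-- The resultant `Res(φ, ψ)` of a monic polynomial `φ` and a polynomial `ψ`, computed
(inside the algebraic closure) as the product `∏ ψ(αᵢ)` over the roots `αᵢ` of `φ`,
counted with multiplicity. -/
noncomputable def resultantAC {k : Type*} [Field k] (φ ψ : k[X]) : AlgebraicClosure k :=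
  (((φ.map (algebraMap k (AlgebraicClosure k))).roots).map
    fun α => (ψ.map (algebraMap k (AlgebraicClosure k))).eval α).prod

/-- `Res_n(k)`: the set of pairs `(φ, ψ)` of monic degree-`n` polynomials over `k`
with `Res(φ, ψ) = 1`. -/
def ResPairs (k : Type*) [Field k] (n : ℕ) : Set (k[X] × k[X]) :=
  {p | p.1.Monic ∧ p.1.natDegree = n ∧ p.2.Monic ∧ p.2.natDegree = n ∧
    resultantAC p.1 p.2 = 1}

/-- `X_n(k)`: pairs `(ψ, φ)` with `ψ` monic of degree `n` whose coefficient of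
`z^{n-1}` vanishes, `φ` of degree at most `n-1`, and `Res(ψ, φ) = 1`. -/
def XPairs (k : Type*) [Field k] (n : ℕ) : Set (k[X] × k[X]) :=
  {p | p.1.Monic ∧ p.1.natDegree = n ∧ p.1.coeff (n - 1) = 0 ∧
    p.2.degree < (n : ℕ) ∧ resultantAC p.1 p.2 = 1}

/-! Since `Res(φ, ψ)` only sees the values of `ψ` at the roots of `φ`, replacing `ψ` by `ψ - φ`
identifies `Res_n` with the pairs `(φ, χ)`, `φ` monic of degree `n`, `deg χ < n`,
`Res(φ, χ) = 1`. The translations `z ↦ z + c` act on these pairs preserving the resultant and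
shift the `z^{n-1}` coefficient of `φ` by `n c`. As `n` is invertible in `F_q`, the action is
free and every orbit meets `X_n` exactly once, so the pairs are in bijection with `F_q × X_n`. -/

namespace Polynomial

lemma coeff_taylor_natDegree_sub_one {R : Type*} [CommSemiring R] (p : R[X]) (r : R) :
    (taylor r p).coeff (p.natDegree - 1) =
      p.coeff (p.natDegree - 1) + p.natDegree * r * p.leadingCoeff := by
  obtain hp | hp := Nat.eq_zero_or_pos p.natDegree
  · rw [hp, Nat.zero_sub, taylor_coeff_zero, eq_C_of_natDegree_eq_zero hp]
    simp
  set n := p.natDegree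
  have hderiv : hasseDeriv (n - 1) p = C (p.coeff (n - 1)) + C (n * p.leadingCoeff) * X := by
    ext m
    rw [hasseDeriv_coeff]
    match m with
    | 0 => simp
    | 1 =>
      rw [show 1 + (n - 1) = n by omega, Nat.choose_symm_of_eq_add (show n = n - 1 + 1 by omega),
        Nat.choose_one_right, coeff_natDegree]
      simp
    | m + 2 =>
      simp [coeff_eq_zero_of_natDegree_lt (show n < m + 2 + (n - 1) by omega)]
  rw [taylor_coeff, hderiv]
  simp only [eval_add, eval_C, eval_mul, eval_X]
  ring

lemma Monic.degree_sub_lt_iff {k : Type*} [Field k] {φ ψ : k[X]} (hφ : φ.Monic) :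
    (ψ - φ).degree < φ.natDegree ↔ ψ.Monic ∧ ψ.natDegree = φ.natDegree := by
  rw [← degree_eq_natDegree hφ.ne_zero]
  constructor
  · intro h
    rw [← sub_add_cancel ψ φ]
    exact ⟨hφ.add_of_right h, natDegree_add_eq_right_of_degree_lt h⟩
  · rintro ⟨hψ, hdeg⟩
    have hdeg' : ψ.degree = φ.degree := by
      rw [degree_eq_natDegree hψ.ne_zero, hdeg, degree_eq_natDegree hφ.ne_zero]
    exact hdeg' ▸ degree_sub_lt_left hdeg' hψ.ne_zero (by rw [hψ, hφ])

lemma roots_taylor {R : Type*} [CommRing R] [IsDomain R] (p : R[X]) (r : R) :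
    (taylor r p).roots = p.roots.map (· - r) := by
  simpa [taylor_apply] using roots_comp_C_mul_X_add_C p 1 r isUnit_one

end Polynomial

section Resultant

variable {k : Type*} [Field k]

lemma resultantAC_add_mul (φ ψ χ : k[X]) : resultantAC φ (ψ + φ * χ) = resultantAC φ ψ := by
  unfold resultantAC
  congr 1
  refine Multiset.map_congr rfl fun α hα => ?_
  simp [(isRoot_of_mem_roots hα).eq_zero]

lemma resultantAC_taylor (φ ψ : k[X]) (c : k) :
    resultantAC (taylor c φ) (taylor c ψ) = resultantAC φ ψ := by
  unfold resultantAC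
  rw [map_taylor, map_taylor, roots_taylor, Multiset.map_map]
  congr 1
  refine Multiset.map_congr rfl fun α _ => ?_
  simp [taylor_eval]

end Resultant

lemma FiniteField.natCast_ne_zero_of_coprime_card {K : Type*} [Field K] [Fintype K] {n : ℕ}
    (h : (Fintype.card K).Coprime n) : (n : K) ≠ 0 := fun hn =>
  CharP.ringChar_ne_one <| Nat.dvd_one.mp <|
    h ▸ Nat.dvd_gcd (ringChar.dvd (FiniteField.cast_card_eq_zero K)) (ringChar.dvd hn)

def ReducedResPairs (k : Type*) [Field k] (n : ℕ) : Set (k[X] × k[X]) :=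
  {p | p.1.Monic ∧ p.1.natDegree = n ∧ p.2.degree < n ∧ resultantAC p.1 p.2 = 1}

section Equivs

variable {k : Type*} [Field k] {n : ℕ}

lemma mem_XPairs_iff {p : k[X] × k[X]} :
    p ∈ XPairs k n ↔ p ∈ ReducedResPairs k n ∧ p.1.coeff (n - 1) = 0 := by
  simp only [XPairs, ReducedResPairs, Set.mem_ofPred_eq]
  tauto

noncomputable def resPairsEquivReducedResPairs :
    ResPairs k n ≃ ReducedResPairs k n :=
  ((Equiv.refl k[X]).prodShear fun φ => Equiv.subRight φ).subtypeEquiv fun ⟨φ, ψ⟩ => by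
    simp only [ResPairs, ReducedResPairs, Set.mem_ofPred_eq, Equiv.prodShear_apply,
      Equiv.refl_apply, Equiv.subRight_apply]
    constructor
    · rintro ⟨hφ, hφn, hψ, hψn, hres⟩
      refine ⟨hφ, hφn, hφn ▸ hφ.degree_sub_lt_iff.mpr ⟨hψ, hψn.trans hφn.symm⟩, ?_⟩
      rwa [sub_eq_add_neg, ← mul_neg_one, resultantAC_add_mul]
    · rintro ⟨hφ, hφn, hlt, hres⟩
      obtain ⟨hψ, hψn⟩ := hφ.degree_sub_lt_iff.mp (hφn ▸ hlt)
      refine ⟨hφ, hφn, hψ, hψn.trans hφn, ?_⟩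
      rwa [sub_eq_add_neg, ← mul_neg_one, resultantAC_add_mul] at hres

lemma taylor_mem_reducedResPairs {p : k[X] × k[X]} (hp : p ∈ ReducedResPairs k n) (c : k) :
    p.map (taylor c) (taylor c) ∈ ReducedResPairs k n := by
  obtain ⟨hφ, hφn, hψ, hres⟩ := hp
  exact ⟨(leadingCoeff_taylor _ _).trans hφ, (natDegree_taylor _ c).trans hφn,
    (degree_taylor _ c).symm ▸ hψ, (resultantAC_taylor _ _ c).trans hres⟩

lemma coeff_taylor_of_mem_reducedResPairs {p : k[X] × k[X]} (hp : p ∈ ReducedResPairs k n)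
    (c : k) : (taylor c p.1).coeff (n - 1) = p.1.coeff (n - 1) + n * c := by
  obtain ⟨hφ, hφn, -⟩ := hp
  simpa [hφn, hφ.leadingCoeff] using coeff_taylor_natDegree_sub_one p.1 c

noncomputable def reducedResPairsEquivProdXPairs (hn : (n : k) ≠ 0) :
    ReducedResPairs k n ≃ k × XPairs k n where
  toFun p :=
    let c := p.1.1.coeff (n - 1) / n
    (c, ⟨p.1.map (taylor (-c)) (taylor (-c)), mem_XPairs_iff.mpr
      ⟨taylor_mem_reducedResPairs p.2 _, by
        rw [Prod.map_fst, coeff_taylor_of_mem_reducedResPairs p.2, mul_neg,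
          mul_div_cancel₀ _ hn, add_neg_cancel]⟩⟩)
  invFun x := ⟨x.2.1.map (taylor x.1) (taylor x.1),
    taylor_mem_reducedResPairs (mem_XPairs_iff.mp x.2.2).1 x.1⟩
  left_inv p := by
    ext <;> simp [taylor_taylor]
  right_inv x := by
    obtain ⟨c, p, hp⟩ := x
    have hc : (taylor c p.1).coeff (n - 1) / n = c := by
      rw [coeff_taylor_of_mem_reducedResPairs (mem_XPairs_iff.mp hp).1, (mem_XPairs_iff.mp hp).2,
        zero_add, mul_div_cancel_left₀ _ hn]
    ext <;> simp [hc, taylor_taylor]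

end Equivs

theorem stmt_13_general (F : Type*) [Field F] [Fintype F] (q : ℕ) (hq : Fintype.card F = q)
    (n : ℕ) (hgcd : Nat.gcd q n = 1) :
    q * Nat.card (XPairs F n) = Nat.card (ResPairs F n) := by
  have hn : (n : F) ≠ 0 := FiniteField.natCast_ne_zero_of_coprime_card (hq ▸ hgcd)
  calc q * Nat.card (XPairs F n)
      = Nat.card (F × XPairs F n) := by rw [Nat.card_prod, Nat.card_eq_fintype_card (α := F), hq]
    _ = Nat.card (ReducedResPairs F n) := Nat.card_congr (reducedResPairsEquivProdXPairs hn).symm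
    _ = Nat.card (ResPairs F n) := Nat.card_congr resPairsEquivReducedResPairs.symm

/-- if `gcd(q, n) = 1` then `q · |X_n(F_q)| = |Res_n(F_q)|`. -/
theorem stmt_13 (F : Type*) [Field F] [Fintype F] (q : ℕ) (hq : Fintype.card F = q)
    (n : ℕ) (hn : 1 ≤ n) (hgcd : Nat.gcd q n = 1) :
    q * Nat.card (XPairs F n) = Nat.card (ResPairs F n) :=
  stmt_13_general F q hq n hgcd
end

section
/- Let k be a field, let n ≥ 0 and d ≥ 1 be integers, let A be a monic polynomial of degree n over k, let B be a polynomial over k of degree strictly less than n (with B = 0 if n = 0), let P be a monic polynomial of degree d over k, and let a ∈ k^×. Then Res(P·A − a^{−1}·B, a·A) = (−1)^{n·d} · a^d · Res(A, B). -/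
open Polynomial

/-!
For a monic first argument, the root product `resultantAC` is the image of Mathlib's Sylvester
resultant, so the identity is resultant bookkeeping: pull out the scalar `a`, reduce
`P·A - a⁻¹·B` modulo `A` to `-a⁻¹·B`, pull out `-a⁻¹`, and swap the arguments. The sign
`(-1)^(n·d)` is the cost of reading `B` with formal degree `n + d` instead of `n`; the other
signs `(-1)^n·(-1)^(n·n)` cancel.
-/

theorem resultant_mul_sub_C_mul_C_mul {R : Type*} [CommRing R] {A B P : R[X]} {n d : ℕ}
    (hA : A.natDegree ≤ n) (hAn : A.coeff n = 1) (hB : B.natDegree ≤ n) (hP : P.natDegree ≤ d)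
    (a c : R) :
    resultant (P * A - C c * B) (C a * A) (n + d) n =
      (-1) ^ (n * d) * a ^ (n + d) * c ^ n * resultant A B n n := by
  have hsign : (-1 : R) ^ n * (-1) ^ (n * n) = 1 := by
    rw [← pow_add, show n + n * n = n * (n + 1) by ring]
    exact (Nat.even_mul_succ_self n).neg_one_pow
  have hred : P * A - C c * B = C (-c) * B + A * P := by rw [C_neg]; ring
  rw [resultant_C_mul_right, hred, resultant_add_mul_left _ _ _ _ _ (by omega) hA,
    resultant_C_mul_left, resultant_add_left_deg _ _ _ _ _ hB, resultant_comm B A, hAn, neg_pow]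
  linear_combination (-1) ^ (n * d) * a ^ (n + d) * c ^ n * resultant A B n n * hsign

theorem resultantAC_eq_algebraMap_resultant {k : Type*} [Field k] {φ ψ : k[X]} (hφ : φ.Monic)
    {m : ℕ} (hψ : ψ.natDegree ≤ m) :
    resultantAC φ ψ = algebraMap k (AlgebraicClosure k) (resultant φ ψ φ.natDegree m) := by
  set f := algebraMap k (AlgebraicClosure k)
  rw [← resultant_map_map, ← natDegree_map f,
    resultant_eq_prod_eval _ _ _ (natDegree_map_le.trans hψ) (IsAlgClosed.splits _),
    (hφ.map f).leadingCoeff, one_pow, one_mul]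
  rfl

theorem stmt_15_general (k : Type*) [Field k] (n d : ℕ) (A B P : k[X])
    (hA : A.Monic) (hAn : A.natDegree = n) (hB : B.degree < (n : ℕ))
    (hP : P.Monic) (hPd : P.natDegree = d) (a : kˣ) :
    resultantAC (P * A - C ((a⁻¹ : kˣ) : k) * B) (C (a : k) * A) =
      (-1) ^ (n * d) * algebraMap k (AlgebraicClosure k) ((a : k) ^ d) *
        resultantAC A B := by
  have hBn : B.natDegree ≤ n := natDegree_le_of_degree_le hB.le
  have hPA : (P * A).natDegree = n + d := by rw [hP.natDegree_mul hA, hAn, hPd, add_comm]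
  have hlt : (C ((a⁻¹ : kˣ) : k) * B).degree < (P * A).degree := by
    rw [degree_C_mul (Units.ne_zero _), degree_eq_natDegree (hP.mul hA).ne_zero, hPA]
    exact hB.trans_le (by exact_mod_cast Nat.le_add_right n d)
  have hdeg : (P * A - C ((a⁻¹ : kˣ) : k) * B).natDegree = n + d := by
    rw [natDegree_eq_of_degree_eq (degree_sub_eq_left_of_degree_lt hlt), hPA]
  have hpow : (a : k) ^ (n + d) * ((a⁻¹ : kˣ) : k) ^ n = (a : k) ^ d := by
    rw [pow_add, mul_right_comm, ← mul_pow, Units.mul_inv, one_pow, one_mul]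
  rw [resultantAC_eq_algebraMap_resultant ((hP.mul hA).sub_of_left hlt)
      ((natDegree_C_mul_le _ _).trans hAn.le), hdeg,
    resultant_mul_sub_C_mul_C_mul hAn.le (hAn ▸ hA.coeff_natDegree) hBn hPd.le,
    resultantAC_eq_algebraMap_resultant hA hBn, hAn, ← hpow]
  simp only [map_mul, map_pow, map_neg, map_one]
  ring

/-- for `A` monic of degree `n`, `B` of degree `< n`, `P` monic of degree
`d ≥ 1`, and a unit `a`, one has `Res(P·A - a⁻¹·B, a·A) = (-1)^{nd} · a^d · Res(A, B)`. -/
theorem stmt_15 (k : Type*) [Field k] (n d : ℕ) (hd : 1 ≤ d) (A B P : k[X])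
    (hA : A.Monic) (hAn : A.natDegree = n) (hB : B.degree < (n : ℕ))
    (hP : P.Monic) (hPd : P.natDegree = d) (a : kˣ) :
    resultantAC (P * A - C ((a⁻¹ : kˣ) : k) * B) (C (a : k) * A) =
      (-1) ^ (n * d) * algebraMap k (AlgebraicClosure k) ((a : k) ^ d) *
        resultantAC A B :=
  stmt_15_general k n d A B P hA hAn hB hP hPd a
end
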